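/- arXiv:2006.07067 — 10 statements merged into one kernel-verified Lean document; each statement's English description precedes it below -/
import Mathlib

section
/- For every finite nonempty graph G there exists a linear order < on its vertex set such that (G,<) is a breadth-first traversal, i.e., for all vertices u < v < w, if u is adjacent to w then there exists x with x < v, x ≤ u, and x adjacent to v. -/
/-!
Greedy breadth-first search: list the vertices one at a time, always appending an unlisted
vertex whose first listed neighbour comes as early as possible (any unlisted vertex if no unlisted
vertex has a listed neighbour). If `u = l[i]` is adjacent to a vertex `w` still unlisted when
`l[j]` is chosen, then `w` was a candidate at that step, so the first neighbour of `l[j]` sits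
at a position at most `i`.
-/

namespace List

variable {α : Type*} [Fintype α] {l : List α}

theorem exists_notMem_of_length_lt_card (hl : l.length < Fintype.card α) : ∃ a, a ∉ l := by
  by_contra! hall
  have := Fintype.card_le_of_surjective _ fun a => mem_iff_get.1 (hall a)
  simp only [Fintype.card_fin] at this
  omega

theorem Nodup.mem_of_length_eq_card (hnd : l.Nodup) (hl : l.length = Fintype.card α) (a : α) :
    a ∈ l := by
  by_contra ha
  have := (nodup_cons.2 ⟨ha, hnd⟩).length_le_card
  simp only [length_cons] at this
  omega

end List

namespace SimpleGraph

variable {V : Type*} {G : SimpleGraph V}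

variable (G) in
/-- The invariant of the greedy construction. It quantifies over all `w` not listed before
position `j`, not only over those listed after it, so that it survives appending a vertex. -/
def IsBFSPrefix (l : List V) : Prop :=
  ∀ i j (hij : i < j) (hj : j < l.length) (w : V), w ∉ l.take j → G.Adj l[i] w →
    ∃ x ∈ l.take (i + 1), G.Adj x l[j]

theorem isBFSPrefix_nil : G.IsBFSPrefix [] :=
  fun _ _ _ hj => absurd hj (Nat.not_lt_zero _)

theorem IsBFSPrefix.exists_adj_of_adj {l : List V} (hl : G.IsBFSPrefix l) (hnd : l.Nodup)
    {i j k : ℕ} (hij : i < j) (hjk : j < k) (hk : k < l.length) (hadj : G.Adj l[i] l[k]) :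
    ∃ x ∈ l.take (i + 1), G.Adj x l[j] := by
  refine hl i j hij (by omega) _ (fun hmem => ?_) hadj
  obtain ⟨m, hm, hmk⟩ := List.mem_take_iff_getElem.1 hmem
  have := hnd.getElem_inj_iff.1 hmk
  omega

section Greedy

variable [DecidableRel G.Adj]

variable (G) in
/-- `l.length` if `w` has no neighbour in `l`. -/
def firstNeighborIdx (l : List V) (w : V) : ℕ :=
  l.findIdx (G.Adj · w)

theorem firstNeighborIdx_le {l : List V} {w : V} {i : ℕ} (hi : i < l.length)
    (hadj : G.Adj l[i] w) : G.firstNeighborIdx l w ≤ i := by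
  by_contra! hlt
  simpa [hadj] using List.not_of_lt_findIdx hlt

theorem adj_getElem_firstNeighborIdx {l : List V} {w : V}
    (h : G.firstNeighborIdx l w < l.length) : G.Adj l[G.firstNeighborIdx l w] w :=
  of_decide_eq_true (List.findIdx_getElem (w := h))

theorem IsBFSPrefix.append_singleton {l : List V} {v : V} (hl : G.IsBFSPrefix l)
    (hv : ∀ w ∉ l, G.firstNeighborIdx l v ≤ G.firstNeighborIdx l w) :
    G.IsBFSPrefix (l ++ [v]) := by
  intro i j hij hj w hw hadj
  simp only [List.length_append, List.length_singleton] at hj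
  rw [List.getElem_append_left (by omega)] at hadj
  rw [List.take_append_of_le_length (by omega)]
  obtain hj | rfl := Nat.lt_or_eq_of_le (Nat.le_of_lt_succ hj)
  · rw [List.take_append_of_le_length hj.le] at hw
    rw [List.getElem_append_left hj]
    exact hl i j hij hj w hw hadj
  · rw [List.take_left' rfl] at hw
    have hvi : G.firstNeighborIdx l v ≤ i := (hv w hw).trans (firstNeighborIdx_le _ hadj)
    rw [List.getElem_concat_length rfl]
    exact ⟨_, List.mem_take_iff_getElem.2 ⟨G.firstNeighborIdx l v, by omega, rfl⟩,
      adj_getElem_firstNeighborIdx (by omega)⟩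

end Greedy

variable (G) in
theorem exists_nodup_isBFSPrefix [Fintype V] {n : ℕ} (hn : n ≤ Fintype.card V) :
    ∃ l : List V, l.Nodup ∧ l.length = n ∧ G.IsBFSPrefix l := by
  classical
  induction n with
  | zero => exact ⟨[], List.nodup_nil, rfl, isBFSPrefix_nil⟩
  | succ n ih =>
    obtain ⟨l, hnd, rfl, hl⟩ := ih (by omega)
    obtain ⟨v, hv, hmin⟩ := Set.exists_min_image {w | w ∉ l} (G.firstNeighborIdx l)
      (Set.toFinite _) (List.exists_notMem_of_length_lt_card (by omega))
    refine ⟨l ++ [v], ?_, by simp, hl.append_singleton hmin⟩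
    simpa [List.nodup_append] using ⟨hnd, fun a ha hav => hv (hav ▸ ha)⟩

end SimpleGraph

theorem exists_bft_general {V : Type*} [Fintype V] (G : SimpleGraph V) :
    ∃ L : LinearOrder V, ∀ u v w : V, L.lt u v → L.lt v w → G.Adj u w →
      ∃ x : V, L.lt x v ∧ L.le x u ∧ G.Adj x v := by
  classical
  obtain ⟨l, hnd, hlen, hl⟩ := G.exists_nodup_isBFSPrefix le_rfl
  have hmem := hnd.mem_of_length_eq_card hlen
  have hidx (v : V) : l.idxOf v < l.length := List.idxOf_lt_length_iff.2 (hmem v)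
  refine ⟨LinearOrder.lift' (l.idxOf ·) fun a _ h => (List.idxOf_inj (hmem a)).1 h,
    fun u v w huv hvw huw => ?_⟩
  change l.idxOf u < l.idxOf v at huv
  rw [← List.getElem_idxOf (hidx u), ← List.getElem_idxOf (hidx w)] at huw
  obtain ⟨x, hxu, hxv⟩ := hl.exists_adj_of_adj hnd huv hvw (hidx w) huw
  rw [List.getElem_idxOf] at hxv
  rw [List.mem_take_iff_idxOf_lt (hmem x)] at hxu
  exact ⟨x, show l.idxOf x < l.idxOf v by omega, show l.idxOf x ≤ l.idxOf u by omega, hxv⟩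

/-- Every finite nonempty graph admits a breadth-first traversal: a linear order
`<` on its vertices such that for all `u < v < w`, if `u` is adjacent to `w`
then some `x` with `x < v` and `x ≤ u` is adjacent to `v`. -/
theorem exists_bft {V : Type*} [Fintype V] [Nonempty V] (G : SimpleGraph V) :
    ∃ L : LinearOrder V, ∀ u v w : V, L.lt u v → L.lt v w → G.Adj u w →
      ∃ x : V, L.lt x v ∧ L.le x u ∧ G.Adj x v :=
  exists_bft_general G
end

section
/- If < is a traversal of a finite graph G, then every connected component of G forms an interval with respect to <: if u and w are in the same component and u < v < w, then v is in that component. -/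
private lemma crossing_lemma {V : Type*} [LinearOrder V] (G : SimpleGraph V) (v : V) :
    ∀ {a c : V}, G.Walk a c → a < v → v < c →
      G.Reachable a v ∨ ∃ x y, G.Adj x y ∧ x < v ∧ v < y ∧ G.Reachable a x := by
  intro a c p
  induction p with
  | nil => intro h1 h2; exact absurd (h1.trans h2) (lt_irrefl _)
  | @cons a b c h q ih =>
    intro h1 h2
    rcases lt_trichotomy b v with hb | rfl | hb
    · rcases ih hb h2 with hv | ⟨x, y, hxy, hx, hy, hrx⟩
      · exact Or.inl (h.reachable.trans hv)
      · exact Or.inr ⟨x, y, hxy, hx, hy, h.reachable.trans hrx⟩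
    · exact Or.inl h.reachable
    · exact Or.inr ⟨a, b, h, h1, hb, SimpleGraph.Reachable.refl a⟩

/-- If `<` is a traversal of a finite graph `G`, then connected components form
intervals: if `u` and `w` are in the same component and `u < v < w`, then `v`
is in that component. -/
theorem traversal_component_interval {V : Type*} [Fintype V] [LinearOrder V]
    (G : SimpleGraph V)
    (ht : ∀ u v w : V, u < v → v < w → G.Adj u w → ∃ x : V, x < v ∧ G.Adj x v)
    (u v w : V) (hr : G.Reachable u w) (h1 : u < v) (h2 : v < w) :
    G.Reachable u v := by
  suffices H : ∀ v : V, ∀ u w : V, u < v → v < w → G.Reachable u w → G.Reachable u v from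
    H v u w h1 h2 hr
  clear hr h1 h2 u v w
  intro v
  induction v using WellFoundedLT.induction with
  | _ v ih =>
    intro u w h1 h2 hr
    obtain ⟨p⟩ := hr
    rcases crossing_lemma G v p h1 h2 with hv | ⟨x, y, hxy, hx, hy, hux⟩
    · exact hv
    · obtain ⟨z, hz, hzv⟩ := ht x v y hx hy hxy
      rcases lt_trichotomy z u with hzu | rfl | huz
      · have : G.Reachable z u := ih u h1 z v hzu h1 hzv.reachable
        exact this.symm.trans hzv.reachable
      · exact hzv.reachable
      · have : G.Reachable u z := ih z hz u w huz (hz.trans h2) ⟨p⟩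
        exact this.trans hzv.reachable
end

section
/- A finite graph G is acyclic if and only if for some (equivalently, every) traversal < of G, no vertex has two distinct neighbors that both precede it in <. -/
/-!
In a traversal a vertex with no earlier neighbour is crossed by no edge, so it starts a new
component; by induction, every component meets each initial segment `{z ≤ b}` in a connected
set. Hence two earlier neighbours `x, y` of `v` would be joined both by a path below `v` and
by `x v y`, which is impossible in a forest. Conversely, in any linear order the largest
vertex of a cycle has two earlier neighbours. Breadth-first order supplies a traversal.
-/

namespace SimpleGraph

variable {V : Type*} {G : SimpleGraph V}

def IsTraversal [LinearOrder V] (G : SimpleGraph V) : Prop :=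
  ∀ ⦃u v w : V⦄, u < v → v < w → G.Adj u w → ∃ x < v, G.Adj x v

section LinearOrder

variable [LinearOrder V]

theorem IsTraversal.not_reachable_of_lt (hT : G.IsTraversal) {u b : V}
    (hb : ¬ ∃ x < b, G.Adj x b) (hu : u < b) : ¬ G.Reachable u b := by
  rintro ⟨p⟩
  obtain ⟨d, -, hd, hd'⟩ := p.exists_boundary_dart {z | z < b} hu (lt_irrefl b)
  rcases (not_lt.1 hd').eq_or_lt with hdb | hdb
  · exact hb ⟨d.fst, hd, hdb ▸ d.adj⟩
  · exact hb (hT hd hdb d.adj)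

theorem IsTraversal.exists_walk_support_le [Finite V] (hT : G.IsTraversal) (b : V) :
    ∀ u ≤ b, G.Reachable u b → ∃ p : G.Walk u b, ∀ z ∈ p.support, z ≤ b := by
  induction b using WellFoundedLT.induction with
  | _ b ih =>
  have below : ∀ u w, u < b → w < b → G.Reachable u w →
      ∃ p : G.Walk u w, ∀ z ∈ p.support, z < b := by
    intro u w hu hw huw
    wlog huw' : u ≤ w generalizing u w
    · obtain ⟨p, hp⟩ := this w u hw hu huw.symm (le_of_not_ge huw')
      exact ⟨p.reverse, by simpa using hp⟩
    obtain ⟨p, hp⟩ := ih w hw u huw' huw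
    exact ⟨p, fun z hz => (hp z hz).trans_lt hw⟩
  intro u hu hub
  rcases hu.eq_or_lt with rfl | hu
  · exact ⟨.nil, by simp⟩
  obtain ⟨x, hx, hxb⟩ : ∃ x < b, G.Adj x b :=
    by_contra fun hb => hT.not_reachable_of_lt hb hu hub
  obtain ⟨p, hp⟩ := below u x hu hx (hub.trans hxb.reachable.symm)
  refine ⟨p.concat hxb, fun z hz => ?_⟩
  simp only [Walk.support_concat, List.mem_append, List.mem_singleton] at hz
  rcases hz with hz | rfl
  · exact (hp z hz).le
  · exact le_rfl

theorem IsAcyclic.not_exists_two_earlier_neighbors [Finite V] (hG : G.IsAcyclic)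
    (hT : G.IsTraversal) :
    ¬ ∃ v x y : V, x ≠ y ∧ x < v ∧ y < v ∧ G.Adj x v ∧ G.Adj y v := by
  rintro ⟨v, x, y, hxy, hx, hy, hxv, hyv⟩
  wlog hxy' : x ≤ y generalizing x y
  · exact this y x hxy.symm hy hx hyv hxv (le_of_not_ge hxy')
  obtain ⟨p, hp⟩ := hT.exists_walk_support_le y x hxy' (hxv.reachable.trans hyv.reachable.symm)
  have hq : (Walk.cons hxv hyv.symm.toWalk).IsPath := by
    simp [Walk.isPath_def, hxv.ne, hyv.ne', hxy]
  have hv : v ∈ (p.toPath : G.Walk x y).support := by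
    rw [(hG.subsingleton_path x y).elim p.toPath ⟨_, hq⟩]
    simp
  exact (hp v (p.support_toPath_subset_support hv)).not_gt hy

theorem Walk.IsCycle.exists_two_earlier_neighbors {a : V} {c : G.Walk a a} (hc : c.IsCycle) :
    ∃ v x y : V, x ≠ y ∧ x < v ∧ y < v ∧ G.Adj x v ∧ G.Adj y v := by
  classical
  obtain ⟨v, hv, hmax⟩ := c.support.toFinset.exists_max_image id ⟨a, by simp⟩
  rw [List.mem_toFinset] at hv
  obtain ⟨x, y, hxy, hN⟩ := Set.ncard_eq_two.1 (hc.ncard_neighborSet_toSubgraph_eq_two hv)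
  have earlier : ∀ z ∈ c.toSubgraph.neighborSet v, z < v ∧ G.Adj z v := fun z hz =>
    ⟨(hmax z (List.mem_toFinset.2 (c.mem_verts_toSubgraph.1 hz.snd_mem))).lt_of_ne hz.adj_sub.ne',
      hz.adj_sub.symm⟩
  obtain ⟨hx, hxv⟩ := earlier x (by simp [hN])
  obtain ⟨hy, hyv⟩ := earlier y (by simp [hN])
  exact ⟨v, x, y, hxy, hx, hy, hxv, hyv⟩

end LinearOrder

variable (G) in
/-- Breadth-first order: components one after another, each listed by distance from a base
point, ties broken by `f`. -/
noncomputable def bfsKey (f : V → ℕ) (v : V) : ℕ ×ₗ ℕ ×ₗ ℕ :=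
  toLex (f (G.connectedComponentMk v).out,
    toLex (G.dist (G.connectedComponentMk v).out v, f v))

theorem exists_isTraversal [Countable V] (G : SimpleGraph V) :
    ∃ _ : LinearOrder V, G.IsTraversal := by
  obtain ⟨f, hf⟩ := Countable.exists_injective_nat V
  let _ : LinearOrder V := LinearOrder.lift' (G.bfsKey f)
    fun u v h => hf (congrArg (fun k => (ofLex (ofLex k).2).2) h)
  set root : V → V := fun v => (G.connectedComponentMk v).out
  have root_reachable (v : V) : G.Reachable (root v) v := ConnectedComponent.exact (Quot.out_eq _)
  have root_eq {u v : V} (h : G.Reachable u v) : root u = root v :=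
    congrArg Quot.out (ConnectedComponent.sound h)
  have lt_of_dist_lt {u v : V} (hr : root u = root v)
      (h : G.dist (root u) u < G.dist (root v) v) : u < v :=
    Prod.Lex.toLex_lt_toLex.2 (.inr ⟨by simp only [root] at hr; rw [hr], .left _ _ h⟩)
  have root_le (v : V) : root v ≤ v := by
    rcases eq_or_ne (G.dist (root v) v) 0 with h | h
    · rw [(root_reachable v).dist_eq_zero_iff.1 h]
    · refine (lt_of_dist_lt (root_eq (root_reachable v)) ?_).le
      rw [root_eq (root_reachable v), dist_self]
      exact Nat.pos_of_ne_zero h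
  refine ⟨‹_›, fun u v w huv hvw huw => ?_⟩
  have fst_le {a b : V} (h : a < b) : f (root a) ≤ f (root b) := Prod.Lex.monotone_fst _ _ h.le
  have hroot : root u = root v := hf <| (fst_le huv).antisymm <|
    (fst_le hvw).trans_eq (congrArg f (root_eq huw.reachable).symm)
  rcases eq_or_ne (G.dist (root v) v) 0 with h | h
  · exact absurd (hroot.trans ((root_reachable v).dist_eq_zero_iff.1 h))
      ((root_le u).trans_lt huv).ne
  obtain ⟨p, hp⟩ := (root_reachable v).exists_walk_length_eq_dist
  have hp_nil : ¬ p.Nil := by rw [Walk.not_nil_iff_lt_length, hp]; exact Nat.pos_of_ne_zero h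
  refine ⟨p.penultimate, lt_of_dist_lt ?_ ?_, p.adj_penultimate hp_nil⟩
  · exact root_eq (p.adj_penultimate hp_nil).reachable
  · rw [root_eq (p.adj_penultimate hp_nil).reachable]
    calc G.dist (root v) p.penultimate ≤ p.dropLast.length := G.dist_le _
      _ < G.dist (root v) v := by rw [Walk.length_dropLast, hp]; omega

end SimpleGraph

/-- A finite graph is acyclic iff for every traversal no vertex has two
distinct prior neighbors, and also iff for some traversal no vertex has two
distinct prior neighbors. -/
theorem acyclic_iff_traversal {V : Type*} [Fintype V] (G : SimpleGraph V) :
    (G.IsAcyclic ↔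
      ∀ L : LinearOrder V,
        (∀ u v w : V, L.lt u v → L.lt v w → G.Adj u w →
          ∃ x : V, L.lt x v ∧ G.Adj x v) →
        ¬ ∃ (v x y : V), x ≠ y ∧ L.lt x v ∧ L.lt y v ∧ G.Adj x v ∧ G.Adj y v) ∧
    (G.IsAcyclic ↔
      ∃ L : LinearOrder V,
        (∀ u v w : V, L.lt u v → L.lt v w → G.Adj u w →
          ∃ x : V, L.lt x v ∧ G.Adj x v) ∧
        ¬ ∃ (v x y : V), x ≠ y ∧ L.lt x v ∧ L.lt y v ∧ G.Adj x v ∧ G.Adj y v) := by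
  obtain ⟨L₀, hL₀⟩ := G.exists_isTraversal
  have isAcyclic (L : LinearOrder V)
      (h : ¬ ∃ v x y : V, x ≠ y ∧ L.lt x v ∧ L.lt y v ∧ G.Adj x v ∧ G.Adj y v) :
      G.IsAcyclic :=
    fun _ _ hc => h hc.exists_two_earlier_neighbors
  refine ⟨⟨fun hG L hT => ?_, fun h => isAcyclic L₀ (h L₀ hL₀)⟩,
    ⟨fun hG => ⟨L₀, hL₀, ?_⟩, fun ⟨L, _, h⟩ => isAcyclic L h⟩⟩
  · exact hG.not_exists_two_earlier_neighbors hT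
  · exact hG.not_exists_two_earlier_neighbors hL₀
end

section
/- Let < be a traversal of a finite graph G with distinguished vertices s and t. Then s and t lie in the same connected component of G if and only if there is no vertex w with no <-prior neighbor satisfying s < w ≤ t or t < w ≤ s. -/
private lemma traversal_cut {V : Type*} [Fintype V] [LinearOrder V]
    (G : SimpleGraph V)
    (ht : ∀ u v w : V, u < v → v < w → G.Adj u w → ∃ x : V, x < v ∧ G.Adj x v)
    {w : V} (hnp : ¬ ∃ x : V, x < w ∧ G.Adj x w) :
    ∀ {a b : V}, G.Walk a b → a < w → b < w := by
  intro a b p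
  induction p with
  | nil => exact id
  | cons hadj p ih =>
    intro hu
    apply ih
    by_contra hv
    push_neg at hv
    rcases eq_or_lt_of_le hv with rfl | hlt
    · exact hnp ⟨_, hu, hadj⟩
    · exact hnp (ht _ w _ hu hlt hadj)

private lemma traversal_reach {V : Type*} [Fintype V] [LinearOrder V]
    (G : SimpleGraph V)
    (ht : ∀ u v w : V, u < v → v < w → G.Adj u w → ∃ x : V, x < v ∧ G.Adj x v) :
    ∀ v u : V, u ≤ v → (∀ z, u < z → z ≤ v → ∃ x, x < z ∧ G.Adj x z) →
      G.Reachable u v := by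
  intro v
  induction v using WellFoundedLT.induction with
  | _ v IH =>
    intro u huv h
    rcases eq_or_lt_of_le huv with rfl | hlt
    · exact .refl u
    · obtain ⟨x, hxv, hadj⟩ := h v hlt le_rfl
      rcases le_or_gt u x with hux | hxu
      · exact (IH x hxv u hux (fun z hz1 hz2 => h z hz1 (hz2.trans hxv.le))).trans
          hadj.reachable
      · have hall : ∀ z, x < z → z ≤ u → ∃ y, y < z ∧ G.Adj y z := fun z hz1 hz2 =>
          ht x z v hz1 (hz2.trans_lt hlt) hadj
        exact ((IH u hlt x hxu.le hall).symm.trans hadj.reachable)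

/-- If `<` is a traversal of a finite graph `G` with distinguished vertices `s`
and `t`, then `s` and `t` are in the same connected component iff there is no
vertex `w` with no `<`-prior neighbor satisfying `s < w ≤ t` or `t < w ≤ s`. -/
theorem traversal_reachability {V : Type*} [Fintype V] [LinearOrder V]
    (G : SimpleGraph V)
    (ht : ∀ u v w : V, u < v → v < w → G.Adj u w → ∃ x : V, x < v ∧ G.Adj x v)
    (s t : V) :
    G.Reachable s t ↔
      ¬ ∃ w : V, (¬ ∃ x : V, x < w ∧ G.Adj x w) ∧
        ((s < w ∧ w ≤ t) ∨ (t < w ∧ w ≤ s)) := by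
  constructor
  · rintro hr ⟨w, hnp, hw | hw⟩
    · obtain ⟨p⟩ := hr
      exact absurd (traversal_cut G ht hnp p hw.1) (not_lt.2 hw.2)
    · obtain ⟨p⟩ := hr.symm
      exact absurd (traversal_cut G ht hnp p hw.1) (not_lt.2 hw.2)
  · intro h
    rcases le_total s t with hst | hts
    · refine traversal_reach G ht t s hst (fun z hz1 hz2 => ?_)
      by_contra hc
      exact h ⟨z, hc, Or.inl ⟨hz1, hz2⟩⟩
    · refine (traversal_reach G ht s t hts (fun z hz1 hz2 => ?_)).symm
      by_contra hc
      exact h ⟨z, hc, Or.inr ⟨hz1, hz2⟩⟩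
end

section
/- In the layered graph G obtained from a finite directed graph D on n vertices, every path from (s,0) to (t,n-1) has length congruent to n-1 modulo 2. Consequently, if there is no directed path from s to t in D, then every path in G from (s,0) to (t,n-1) (if any exists) has length at least n+1, so the distance differs from n-1 by at least 2. -/
/-!
Every edge of the layered graph changes the layer by exactly one, so along a walk the length and
the net change of layer agree mod 2, and the length is at least the net change. A walk whose
length equals the net change climbs one layer at every step, hence each of its edges is an edge
of `D`, and projecting it to the first coordinate gives a directed path in `D`.
-/

namespace SimpleGraph

variable {α : Type*} (D : α → α → Prop) (m : ℕ)

def layeredGraph : SimpleGraph (α × Fin m) :=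
  fromRel fun p q => D p.1 q.1 ∧ (q.2 : ℕ) = p.2 + 1

variable {D m}

lemma layeredGraph_adj_layer {x y : α × Fin m} (h : (layeredGraph D m).Adj x y) :
    (D x.1 y.1 ∧ (y.2 : ℤ) = x.2 + 1) ∨ (x.2 : ℤ) = y.2 + 1 := by
  rcases ((fromRel_adj _ x y).mp h).2 with ⟨hD, hup⟩ | ⟨-, hdown⟩
  · exact Or.inl ⟨hD, by exact_mod_cast hup⟩
  · exact Or.inr (by exact_mod_cast hdown)

namespace Walk

lemma layer_sub_le_length {x y : α × Fin m} (p : (layeredGraph D m).Walk x y) :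
    (y.2 : ℤ) - x.2 ≤ p.length := by
  induction p with
  | nil => simp
  | cons h q ih =>
    rw [length_cons]
    rcases layeredGraph_adj_layer h with ⟨-, hup⟩ | hdown <;> omega

lemma length_modEq_layer_sub {x y : α × Fin m} (p : (layeredGraph D m).Walk x y) :
    (p.length : ℤ) ≡ (y.2 : ℤ) - x.2 [ZMOD 2] := by
  induction p with
  | nil => simp [Int.ModEq]
  | cons h q ih =>
    rw [Int.ModEq, length_cons] at *
    rcases layeredGraph_adj_layer h with ⟨-, hup⟩ | hdown <;> omega

lemma reflTransGen_of_length_eq_layer_sub {x y : α × Fin m} (p : (layeredGraph D m).Walk x y)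
    (hp : (p.length : ℤ) = (y.2 : ℤ) - x.2) : Relation.ReflTransGen D x.1 y.1 := by
  induction p with
  | nil => exact .refl
  | cons h q ih =>
    rw [length_cons] at hp
    have hq := q.layer_sub_le_length
    rcases layeredGraph_adj_layer h with ⟨hD, hup⟩ | hdown
    · exact .head hD (ih (by omega))
    · omega

end Walk

end SimpleGraph

theorem layered_graph_walk_parity_general (n : ℕ) (hn : 0 < n) (D : Fin n → Fin n → Prop)
    (s t : Fin n)
    (p : (SimpleGraph.fromRel fun p q : Fin n × Fin n =>
        D p.1 q.1 ∧ (q.2 : ℕ) = (p.2 : ℕ) + 1).Walk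
        (s, ⟨0, hn⟩) (t, ⟨n - 1, Nat.sub_lt hn one_pos⟩)) :
    p.length % 2 = (n - 1) % 2 ∧
    (¬ Relation.ReflTransGen D s t → n + 1 ≤ p.length) := by
  let q : (SimpleGraph.layeredGraph D n).Walk _ _ := p
  have hq : q.length = p.length := rfl
  have hle := q.layer_sub_le_length
  have hmod := q.length_modEq_layer_sub
  have hpath := q.reflTransGen_of_length_eq_layer_sub
  simp only [hq, Int.ModEq, Nat.cast_zero, sub_zero] at hle hmod hpath
  refine ⟨by omega, fun hst => ?_⟩
  by_contra hshort
  exact hst (hpath (by omega))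

/-- In the layered graph of a directed graph `D` on `Fin n` (with self-loops at
every vertex), every walk from `(s,0)` to `(t,n-1)` has length congruent to
`n-1` mod 2, and if there is no directed path from `s` to `t` then every such
walk has length at least `n+1`. -/
theorem layered_graph_walk_parity (n : ℕ) (hn : 0 < n) (D : Fin n → Fin n → Prop)
    (hloop : ∀ u, D u u) (s t : Fin n)
    (p : (SimpleGraph.fromRel fun p q : Fin n × Fin n =>
        D p.1 q.1 ∧ (q.2 : ℕ) = (p.2 : ℕ) + 1).Walk
        (s, ⟨0, hn⟩) (t, ⟨n - 1, Nat.sub_lt hn one_pos⟩)) :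
    p.length % 2 = (n - 1) % 2 ∧
    (¬ Relation.ReflTransGen D s t → n + 1 ≤ p.length) :=
  layered_graph_walk_parity_general n hn D s t p
end

section
/- Let < be a breadth-first traversal of a finite connected graph G with <-least vertex v₀. Then the levels of G (sets of vertices at equal distance from v₀) form intervals of <: if d(v₀,u) = d(v₀,w) and u < v < w then d(v₀,v) = d(v₀,u). -/
private lemma dist_adj_step {V : Type*} {G : SimpleGraph V} (hc : G.Connected)
    {a b : V} (v0 : V) (h : G.Adj a b) : G.dist v0 b ≤ G.dist v0 a + 1 := by
  calc G.dist v0 b ≤ G.dist v0 a + G.dist a b := hc.dist_triangle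
    _ ≤ G.dist v0 a + 1 := by
        have : G.dist a b = 1 := SimpleGraph.dist_eq_one_iff_adj.mpr h
        omega

private lemma bft_dist_mono {V : Type*} [Fintype V] [LinearOrder V]
    (G : SimpleGraph V) (hc : G.Connected)
    (hbft : ∀ u v w : V, u < v → v < w → G.Adj u w →
      ∃ x : V, x < v ∧ x ≤ u ∧ G.Adj x v)
    (v0 : V) (hv0 : ∀ u : V, v0 ≤ u) :
    ∀ w u : V, u < w → G.dist v0 u ≤ G.dist v0 w := by
  intro w
  induction w using WellFoundedLT.induction with
  | ind w IH =>
    intro u hu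
    -- first find x < w with x adjacent to w and dist v0 x ≤ dist v0 w - 1
    have hv0w : v0 < w := lt_of_le_of_lt (hv0 u) hu
    obtain ⟨p, hp⟩ := hc.exists_walk_length_eq_dist v0 w
    -- dist from v0 to getVert j is ≤ j
    have hgv : ∀ j : ℕ, G.dist v0 (p.getVert j) ≤ j := by
      intro j
      induction j with
      | zero => simp [p.getVert_zero]
      | succ j ih =>
        by_cases hj : j < p.length
        · have := dist_adj_step hc v0 (p.adj_getVert_succ hj)
          omega
        · have : p.getVert (j + 1) = p.getVert j := by
            rw [p.getVert_of_length_le (by omega), p.getVert_of_length_le (by omega)]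
          rw [this]; omega
    have hex : ∃ i, w ≤ p.getVert i := ⟨p.length, by rw [p.getVert_length]⟩
    set i := Nat.find hex with hi
    have hiw : w ≤ p.getVert i := Nat.find_spec hex
    have hipos : i ≠ 0 := by
      intro h0
      rw [h0, p.getVert_zero] at hiw
      exact absurd hiw (not_le.mpr hv0w)
    set j := i - 1 with hj
    have hjlt : ¬ w ≤ p.getVert j := Nat.find_min hex (by omega)
    have hjw : p.getVert j < w := not_le.mp hjlt
    have hjlen : j < p.length := by
      by_contra h
      rw [p.getVert_of_length_le (by omega)] at hjw
      exact absurd rfl (ne_of_lt hjw)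
    have hadjj : G.Adj (p.getVert j) (p.getVert (j + 1)) := p.adj_getVert_succ hjlen
    have hji : j + 1 = i := by omega
    -- obtain x < w adjacent to w with dist v0 x + 1 ≤ dist v0 w
    obtain ⟨x, hxw, hadjx, hxd⟩ :
        ∃ x : V, x < w ∧ G.Adj x w ∧ G.dist v0 x + 1 ≤ G.dist v0 w := by
      rcases eq_or_lt_of_le (hji ▸ hiw) with heq | hlt
      · -- p.getVert (j+1) = w
        refine ⟨p.getVert j, hjw, by have h' := hadjj; rwa [← heq] at h', ?_⟩
        have h1 : G.dist v0 (p.getVert j) ≤ j := hgv j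
        have h2 : j + 1 ≤ p.length := hjlen
        omega
      · -- w < p.getVert (j+1); apply BFT
        obtain ⟨x, hx1, hx2, hx3⟩ := hbft (p.getVert j) w (p.getVert (j + 1)) hjw hlt hadjj
        refine ⟨x, hx1, hx3, ?_⟩
        have hxj : G.dist v0 x ≤ G.dist v0 (p.getVert j) := by
          rcases eq_or_lt_of_le hx2 with h | h
          · rw [h]
          · exact IH (p.getVert j) hjw x h
        have h1 : G.dist v0 (p.getVert j) ≤ j := hgv j
        have h2 : j + 1 ≤ p.length := hjlen
        omega
    -- now conclude for u
    rcases lt_trichotomy u x with h | h | h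
    · have := IH x hxw u h
      omega
    · subst h; omega
    · obtain ⟨z, hz1, hz2, hz3⟩ := hbft x u w h hu (hadjx)
      have hzx : G.dist v0 z ≤ G.dist v0 x := by
        rcases eq_or_lt_of_le hz2 with h' | h'
        · rw [h']
        · exact IH x hxw z h'
      have := dist_adj_step hc v0 hz3
      omega

/-- If `<` is a breadth-first traversal of a finite connected graph `G` with
`<`-least vertex `v₀`, then levels (sets of vertices at equal distance from
`v₀`) form intervals of `<`. -/
theorem bft_levels_are_intervals {V : Type*} [Fintype V] [LinearOrder V]
    (G : SimpleGraph V) (hc : G.Connected)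
    (hbft : ∀ u v w : V, u < v → v < w → G.Adj u w →
      ∃ x : V, x < v ∧ x ≤ u ∧ G.Adj x v)
    (v0 : V) (hv0 : ∀ u : V, v0 ≤ u)
    (u v w : V) (hd : G.dist v0 u = G.dist v0 w) (h1 : u < v) (h2 : v < w) :
    G.dist v0 v = G.dist v0 u := by
  have hmono := bft_dist_mono G hc hbft v0 hv0
  have h3 := hmono v u h1
  have h4 := hmono w v h2
  omega
end

section
/- Let < be a breadth-first traversal of a finite connected graph G with <-least vertex v₀. For every vertex v ≠ v₀, the <-least neighbor p(v) of v satisfies d(v₀, p(v)) = d(v₀, v) - 1. -/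
open SimpleGraph

private lemma dist_getVert_le {V : Type*} {G : SimpleGraph V} (hc : G.Connected)
    {a b : V} (q : G.Walk a b) (i : ℕ) : G.dist a (q.getVert i) ≤ i := by
  induction i with
  | zero => simp [SimpleGraph.Walk.getVert_zero]
  | succ i ih =>
    by_cases hi : i < q.length
    · have hadj := q.adj_getVert_succ hi
      have h1 : G.dist (q.getVert i) (q.getVert (i + 1)) = 1 :=
        SimpleGraph.dist_eq_one_iff_adj.mpr hadj
      calc G.dist a (q.getVert (i + 1))
          ≤ G.dist a (q.getVert i) + G.dist (q.getVert i) (q.getVert (i + 1)) :=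
            hc.dist_triangle
        _ ≤ i + 1 := by omega
    · have h1 : q.getVert (i + 1) = b := q.getVert_of_length_le (by omega)
      have h2 : q.getVert i = b := q.getVert_of_length_le (by omega)
      rw [h1]; rw [h2] at ih; omega

/-- The crossing argument: given monotonicity of levels below `w`, every `w ≠ v0`
has a neighbor `x < w` one level below. -/
private lemma bft_crossing {V : Type*} [LinearOrder V]
    {G : SimpleGraph V} (hc : G.Connected)
    (hbft : ∀ u v w : V, u < v → v < w → G.Adj u w →
      ∃ x : V, x < v ∧ x ≤ u ∧ G.Adj x v)
    (v0 : V) (hv0 : ∀ u : V, v0 ≤ u)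
    (w : V) (hw : w ≠ v0)
    (IH : ∀ a : V, a < w → ∀ u : V, u ≤ a → G.dist v0 u ≤ G.dist v0 a) :
    ∃ x : V, x < w ∧ G.Adj x w ∧ G.dist v0 x + 1 = G.dist v0 w := by
  have hv0w : v0 < w := lt_of_le_of_ne (hv0 w) (Ne.symm hw)
  have hdpos : 0 < G.dist v0 w := hc.pos_dist_of_ne (Ne.symm hw)
  obtain ⟨q, hq⟩ := (hc v0 w).exists_walk_length_eq_dist
  set n := q.length with hn
  have hP : ∃ i : ℕ, w ≤ q.getVert i := ⟨n, by rw [q.getVert_length]⟩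
  classical
  set i := Nat.find hP with hi
  have hile : i ≤ n := Nat.find_min' hP (by rw [q.getVert_length])
  have hwb : w ≤ q.getVert i := Nat.find_spec hP
  have hipos : 0 < i := by
    rcases Nat.eq_zero_or_pos i with h0 | h
    · rw [h0, q.getVert_zero] at hwb; exact absurd hwb (not_le.mpr hv0w)
    · exact h
  have ha : ¬ w ≤ q.getVert (i - 1) := Nat.find_min hP (by omega)
  have haw : q.getVert (i - 1) < w := lt_of_not_ge ha
  have hiln : i - 1 < n := by omega
  have hadj : G.Adj (q.getVert (i - 1)) (q.getVert i) := by
    have := q.adj_getVert_succ hiln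
    rwa [Nat.sub_add_cancel hipos] at this
  have hda : G.dist v0 (q.getVert (i - 1)) ≤ i - 1 := dist_getVert_le hc q (i - 1)
  -- get x < w adjacent to w with dist ≤ n - 1
  have hx : ∃ x : V, x < w ∧ G.Adj x w ∧ G.dist v0 x ≤ n - 1 := by
    rcases eq_or_lt_of_le hwb with heq | hlt
    · exact ⟨q.getVert (i - 1), haw, by have h := hadj; rwa [← heq] at h, by omega⟩
    · obtain ⟨x, hx1, hx2, hx3⟩ := hbft _ _ _ haw hlt hadj
      refine ⟨x, hx1, hx3, ?_⟩
      have := IH _ haw x hx2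
      omega
  obtain ⟨x, hx1, hx2, hx3⟩ := hx
  refine ⟨x, hx1, hx2, ?_⟩
  have hge : G.dist v0 w ≤ G.dist v0 x + 1 := by
    calc G.dist v0 w ≤ G.dist v0 x + G.dist x w := hc.dist_triangle
      _ = G.dist v0 x + 1 := by rw [SimpleGraph.dist_eq_one_iff_adj.mpr hx2]
  rw [← hq] at hdpos ⊢
  omega

/-- If `<` is a breadth-first traversal of a finite connected graph `G` with
`<`-least vertex `v₀`, then for every vertex `v ≠ v₀`, the `<`-least neighbor
`p` of `v` satisfies `d(v₀, p) = d(v₀, v) - 1`. -/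
theorem bft_least_neighbor_level {V : Type*} [Fintype V] [LinearOrder V]
    (G : SimpleGraph V) (hc : G.Connected)
    (hbft : ∀ u v w : V, u < v → v < w → G.Adj u w →
      ∃ x : V, x < v ∧ x ≤ u ∧ G.Adj x v)
    (v0 : V) (hv0 : ∀ u : V, v0 ≤ u)
    (v : V) (hv : v ≠ v0) (p : V) (hp1 : G.Adj p v)
    (hp2 : ∀ x : V, G.Adj x v → p ≤ x) :
    G.dist v0 p = G.dist v0 v - 1 := by
  have key : ∀ w : V, ∀ u : V, u ≤ w → G.dist v0 u ≤ G.dist v0 w := by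
    intro w
    induction w using WellFoundedLT.induction with
    | ind w IH =>
      intro u hu
      rcases eq_or_lt_of_le hu with rfl | huw
      · rfl
      have hw : w ≠ v0 := by
        intro h; exact absurd (hv0 u) (not_le.mpr (h ▸ huw))
      obtain ⟨x, hx1, hx2, hx3⟩ := bft_crossing hc hbft v0 hv0 w hw (fun a ha => IH a ha)
      rcases le_or_gt u x with hux | hxu
      · have := IH x hx1 u hux
        omega
      · obtain ⟨y, hy1, hy2, hy3⟩ := hbft _ _ _ hxu huw hx2
        have hdy : G.dist v0 y ≤ G.dist v0 x := IH x hx1 y hy2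
        have : G.dist v0 u ≤ G.dist v0 y + 1 := by
          calc G.dist v0 u ≤ G.dist v0 y + G.dist y u := hc.dist_triangle
            _ = G.dist v0 y + 1 := by rw [SimpleGraph.dist_eq_one_iff_adj.mpr hy3]
        omega
  obtain ⟨x, hx1, hx2, hx3⟩ := bft_crossing hc hbft v0 hv0 v hv
    (fun a _ u hu => key a u hu)
  have hpx : p ≤ x := hp2 x hx2
  have h1 : G.dist v0 p ≤ G.dist v0 x := key x p hpx
  have h2 : G.dist v0 v ≤ G.dist v0 p + 1 := by
    calc G.dist v0 v ≤ G.dist v0 p + G.dist p v := hc.dist_triangle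
      _ = G.dist v0 p + 1 := by rw [SimpleGraph.dist_eq_one_iff_adj.mpr hp1]
  omega
end

section
/- Let < be a breadth-first traversal of a finite connected graph G. If two vertices v and w lie in a common quasi-level, then |d(v₀,v) - d(v₀,w)| ≤ 1, where v₀ is the <-least vertex. If v ≠ v₀, w ≠ v₀ and they lie in no common quasi-level, then d(v₀,v) ≠ d(v₀,w). -/
/-- Quasi-levels in a breadth-first traversal: `p v` denotes the `<`-least
neighbor of `v`; vertices `v ≤ w` lie in a common quasi-level iff `p w < v ≤ w`.
If `v` and `w` lie in a common quasi-level then their distances from the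
`<`-least vertex `v₀` differ by at most 1; if `v ≠ v₀`, `w ≠ v₀` and they lie
in no common quasi-level, their distances from `v₀` are distinct. -/
theorem bft_quasi_levels {V : Type*} [Fintype V] [LinearOrder V]
    (G : SimpleGraph V) (hc : G.Connected)
    (hbft : ∀ u v w : V, u < v → v < w → G.Adj u w →
      ∃ x : V, x < v ∧ x ≤ u ∧ G.Adj x v)
    (v0 : V) (hv0 : ∀ u : V, v0 ≤ u)
    (p : V → V) (hp : ∀ v : V, G.Adj (p v) v ∧ ∀ x : V, G.Adj x v → p v ≤ x)
    (v w : V) :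
    (((p w < v ∧ v ≤ w) ∨ (p v < w ∧ w ≤ v)) →
      |(G.dist v0 v : ℤ) - (G.dist v0 w : ℤ)| ≤ 1) ∧
    (v ≠ v0 → w ≠ v0 → ¬ ((p w < v ∧ v ≤ w) ∨ (p v < w ∧ w ≤ v)) →
      G.dist v0 v ≠ G.dist v0 w) := by
  -- distance from a to c is at most distance from a to b plus 1 if b ~ c
  have hadj_dist : ∀ a b c : V, G.Adj b c → G.dist a c ≤ G.dist a b + 1 := by
    intro a b c hbc
    have h1 : G.dist a c ≤ G.dist a b + G.dist b c := hc.dist_triangle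
    have h2 : G.dist b c ≤ 1 := by
      have := SimpleGraph.dist_le (SimpleGraph.Walk.cons hbc SimpleGraph.Walk.nil)
      simpa using this
    omega
  -- every non-minimal vertex has a smaller neighbor
  have key : ∀ (c a : V), G.Walk a c → a < c → ∃ x, x < c ∧ G.Adj x c := by
    intro c a q
    induction q with
    | nil => intro h; exact absurd rfl h.ne
    | @cons a b c hab q ih =>
      intro hau
      rcases lt_trichotomy b c with hb | hb | hb
      · exact ih hb
      · subst hb; exact ⟨a, hau, hab⟩
      · obtain ⟨x, hx1, _, hx3⟩ := hbft a c b hau hb hab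
        exact ⟨x, hx1, hx3⟩
  have hsmall : ∀ u : V, u ≠ v0 → ∃ x, x < u ∧ G.Adj x u := by
    intro u hu
    obtain ⟨q⟩ := hc.preconnected v0 u
    exact key u v0 q (lt_of_le_of_ne (hv0 u) (Ne.symm hu))
  -- a penultimate vertex on a shortest path
  have hpen : ∀ u : V, u ≠ v0 → ∃ y, G.Adj y u ∧ G.dist v0 y + 1 = G.dist v0 u := by
    intro u hu
    obtain ⟨q, hq⟩ := hc.exists_walk_length_eq_dist v0 u
    have hlen : q.reverse.length = G.dist v0 u := by
      rw [SimpleGraph.Walk.length_reverse]; exact hq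
    cases hrev : q.reverse with
    | nil => exact absurd rfl hu
    | @cons _ y _ huy r =>
      refine ⟨y, huy.symm, ?_⟩
      have h1 : G.dist v0 y ≤ r.length := by
        have := SimpleGraph.dist_le r.reverse
        rwa [SimpleGraph.Walk.length_reverse] at this
      have h2 : r.length + 1 = G.dist v0 u := by
        rw [← hlen, hrev]; simp
      have h3 : G.dist v0 u ≤ G.dist v0 y + 1 := hadj_dist v0 y u huy.symm
      omega
  -- monotonicity of distance with respect to the order
  have hmono : ∀ n : ℕ, ∀ a b : V, a ≤ b → G.dist v0 b = n → G.dist v0 a ≤ n := by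
    intro n
    induction n using Nat.strong_induction_on with
    | _ n ih =>
      intro a b hab hb
      rcases eq_or_lt_of_le hab with rfl | hab
      · omega
      · have hbne : b ≠ v0 := by
          intro h; exact absurd (h ▸ hab) (not_lt.2 (hv0 a))
        obtain ⟨y, hy, hyd⟩ := hpen b hbne
        rcases le_or_gt a y with h1 | h1
        · have := ih (G.dist v0 y) (by omega) a y h1 rfl
          omega
        · obtain ⟨x, hx1, hx2, hx3⟩ := hbft y a b h1 hab hy
          have hxy := ih (G.dist v0 y) (by omega) x y hx2 rfl
          have := hadj_dist v0 x a hx3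
          omega
  -- level formula
  have hlevel : ∀ u : V, u ≠ v0 → G.dist v0 u = G.dist v0 (p u) + 1 := by
    intro u hu
    obtain ⟨y, hy, hyd⟩ := hpen u hu
    have h1 : G.dist v0 u ≤ G.dist v0 (p u) + 1 := hadj_dist v0 (p u) u (hp u).1
    have h2 : G.dist v0 (p u) ≤ G.dist v0 y := hmono _ (p u) y ((hp u).2 y hy) rfl
    omega
  have hplt : ∀ u : V, u ≠ v0 → p u < u := by
    intro u hu
    obtain ⟨x, hx, hadj⟩ := hsmall u hu
    exact lt_of_le_of_lt ((hp u).2 x hadj) hx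
  have hA : ∀ a b : V, a ≤ b → p b < a →
      |(G.dist v0 a : ℤ) - (G.dist v0 b : ℤ)| ≤ 1 := by
    intro a b hab hpb
    by_cases hb : b = v0
    · have ha : a = v0 := le_antisymm (hb ▸ hab) (hv0 a)
      rw [ha, hb]; simp
    · have h1 := hmono (G.dist v0 b) a b hab rfl
      have h2 := hlevel b hb
      have h3 := hmono (G.dist v0 a) (p b) a hpb.le rfl
      rw [abs_le]
      omega
  have hB : ∀ a b : V, a < b → b ≠ v0 → ¬ (p b < a) → G.dist v0 a < G.dist v0 b := by
    intro a b hab hb hnp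
    have h2 := hlevel b hb
    have h3 := hmono (G.dist v0 (p b)) a (p b) (not_lt.1 hnp) rfl
    omega
  refine ⟨?_, ?_⟩
  · rintro (⟨h1, h2⟩ | ⟨h1, h2⟩)
    · exact hA v w h2 h1
    · rw [abs_sub_comm]; exact hA w v h2 h1
  · intro hv hw hn
    have hvw : v ≠ w := by
      rintro rfl
      exact hn (Or.inl ⟨hplt v hv, le_refl v⟩)
    rcases lt_or_gt_of_ne hvw with h | h
    · exact Nat.ne_of_lt (hB v w h hw fun hcc => hn (Or.inl ⟨hcc, h.le⟩))
    · exact (Nat.ne_of_lt (hB w v h hv fun hcc => hn (Or.inr ⟨hcc, h.le⟩))).symm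
end

section
/- Let (G,<) be a finite ordered connected graph with <-least vertex v₀. For each vertex v, let vec(v) be the least shortest path from v₀ to v under the order <* on paths that compares first by length and then lexicographically by the order <. Define v ≺ w iff vec(v) <* vec(w). Then ≺ is a breadth-first traversal of G. -/
/-- The order `<*` on finite vertex sequences: first by length, then
lexicographically with respect to the linear order on vertices. -/
def travOrd {V : Type*} [LinearOrder V] (a b : List V) : Prop :=
  a.length < b.length ∨ (a.length = b.length ∧ List.Lex (· < ·) a b)

/-! Compare lists by the key `shortlex l = (l.length, l)` in `ℕ ×ₗ List V`: `travOrd` is `<` on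
these keys, so `≺` is the pullback of a linear order along the injective map `v ↦ vec v`.

For the traversal property take for `x` the penultimate vertex of `vec v`; dropping the last edge
of `vec v` gives a shorter path to `x`, so `x ≺ v`. If `u ≺ x`, then `vec u` and `vec x` have some
length `ℓ` while `vec v` and `vec w` have length `ℓ + 1`, and `vec u` precedes `vec x`, hence the
truncation of `vec v`, lexicographically. Then `vec u ++ [w]` is a path to `w` that precedes
`vec v ≺ vec w`, contradicting the minimality of `vec w`. -/

theorem List.append_lt_append_of_length_eq {α : Type*} [LT α] {a b : List α} (h : a < b)
    (hl : a.length = b.length) (c d : List α) : a ++ c < b ++ d := by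
  induction h with
  | nil => simp at hl
  | cons _ ih => exact .cons (ih (by simpa using hl))
  | rel h => exact .rel h

def shortlex {α : Type*} (l : List α) : ℕ ×ₗ List α := toLex (l.length, l)

theorem shortlex_injective {α : Type*} : Function.Injective (shortlex : List α → ℕ ×ₗ List α) :=
  fun _ _ h => congrArg Prod.snd (toLex.injective h)

section Shortlex
variable {V : Type*} [LinearOrder V]

theorem travOrd_iff_shortlex_lt {a b : List V} : travOrd a b ↔ shortlex a < shortlex b :=
  (Prod.Lex.toLex_lt_toLex (x := (a.length, a)) (y := (b.length, b))).symm

theorem isStrictTotalOrder_travOrd_comp {α : Type*} {f : α → List V}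
    (hf : Function.Injective f) : IsStrictTotalOrder α (fun a b => travOrd (f a) (f b)) := by
  simp only [travOrd_iff_shortlex_lt]
  exact (shortlex_injective.comp hf).isStrictTotalOrder_onFun (· < ·)

end Shortlex

theorem SimpleGraph.Walk.eq_of_support_eq {V : Type*} {G : SimpleGraph V} {u v w : V}
    {p : G.Walk u v} {q : G.Walk u w} (h : p.support = q.support) : v = w := by
  rw [← p.getLast_support, ← q.getLast_support]
  simp only [h]

namespace SimpleGraph

variable {V : Type*} [LinearOrder V] {G : SimpleGraph V}

theorem Walk.shortlex_support_lt_iff {a b c : V} {p : G.Walk a b} {q : G.Walk a c} :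
    shortlex p.support < shortlex q.support ↔
      p.length ≤ q.length ∧ (p.length = q.length → p.support < q.support) := by
  simp [shortlex, Prod.Lex.toLex_lt_toLex']

theorem Walk.shortlex_support_le_iff {a b c : V} {p : G.Walk a b} {q : G.Walk a c} :
    shortlex p.support ≤ shortlex q.support ↔
      p.length ≤ q.length ∧ (p.length = q.length → p.support ≤ q.support) := by
  simp [shortlex, Prod.Lex.toLex_le_toLex']

theorem Walk.not_nil_of_shortlex_lt {a b c : V} {p : G.Walk a b} {q : G.Walk a c}
    (h : shortlex p.support < shortlex q.support) : ¬ q.Nil := by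
  intro hq
  have hlen := (Walk.shortlex_support_lt_iff.1 h).1
  rw [Walk.length_eq_zero_iff.2 hq] at hlen
  have hp : p.Nil := Walk.length_eq_zero_iff.1 (Nat.le_zero.1 hlen)
  rw [Walk.nil_iff_support_eq.1 hp, Walk.nil_iff_support_eq.1 hq] at h
  exact lt_irrefl _ h

structure IsShortlexLeastPaths {v0 : V} (vec : ∀ v, G.Walk v0 v) : Prop where
  isPath : ∀ v, (vec v).IsPath
  shortlex_le : ∀ v (q : G.Walk v0 v), q.IsPath → shortlex (vec v).support ≤ shortlex q.support

namespace IsShortlexLeastPaths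

variable {v0 : V} {vec : ∀ v, G.Walk v0 v}

theorem of_travOrd (hpath : ∀ v, (vec v).IsPath)
    (hleast : ∀ v (q : G.Walk v0 v), q.IsPath →
      (vec v).support = q.support ∨ travOrd (vec v).support q.support) :
    IsShortlexLeastPaths vec where
  isPath := hpath
  shortlex_le v q hq := by
    rcases hleast v q hq with h | h
    · rw [h]
    · exact (travOrd_iff_shortlex_lt.1 h).le

theorem length_le (h : IsShortlexLeastPaths vec) {v : V} {q : G.Walk v0 v} (hq : q.IsPath) :
    (vec v).length ≤ q.length :=
  (Walk.shortlex_support_le_iff.1 (h.shortlex_le v q hq)).1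

theorem not_mem_support_of_shortlex_lt (h : IsShortlexLeastPaths vec) {u w : V}
    (huw : shortlex (vec u).support < shortlex (vec w).support) : w ∉ (vec u).support := by
  intro hw
  have hlen := (Walk.shortlex_support_lt_iff.1 huw).1
  have htake := h.length_le ((h.isPath u).takeUntil hw)
  have hsplit := congrArg Walk.length ((vec u).take_spec hw)
  rw [Walk.length_append] at hsplit
  have hwu : w = u := (Walk.eq_of_length_eq_zero (by omega : ((vec u).dropUntil w hw).length = 0))
  exact lt_irrefl _ (hwu ▸ huw)

theorem penultimate_lt (h : IsShortlexLeastPaths vec) {v : V} (hv : ¬ (vec v).Nil) :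
    shortlex (vec (vec v).penultimate).support < shortlex (vec v).support := by
  have hlen := h.length_le (h.isPath v).dropLast
  have hdrop := Walk.length_dropLast_add_one hv
  exact Walk.shortlex_support_lt_iff.2 ⟨by omega, fun _ => by omega⟩

theorem penultimate_le_of_adj (h : IsShortlexLeastPaths vec) {u v w : V}
    (huv : shortlex (vec u).support < shortlex (vec v).support)
    (hvw : shortlex (vec v).support < shortlex (vec w).support) (huw : G.Adj u w) :
    shortlex (vec (vec v).penultimate).support ≤ shortlex (vec u).support := by
  set x := (vec v).penultimate
  have hv : ¬ (vec v).Nil := Walk.not_nil_of_shortlex_lt huv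
  by_contra! hux
  set q := (vec v).dropLast
  have hq : q.IsPath := (h.isPath v).dropLast
  have hqv : q.support ++ [v] = (vec v).support := Walk.support_dropLast_concat hv
  have hqlen : q.length + 1 = (vec v).length := Walk.length_dropLast_add_one hv
  set r := (vec u).concat huw
  have hr : r.IsPath := (h.isPath u).concat (h.not_mem_support_of_shortlex_lt (huv.trans hvw)) huw
  have hr_len : r.length = (vec u).length + 1 := Walk.length_concat _ _
  have hr_supp : r.support = (vec u).support ++ [w] := Walk.support_concat _ _
  obtain ⟨hux_len, hux_lt⟩ := Walk.shortlex_support_lt_iff.1 hux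
  obtain ⟨huv_len, -⟩ := Walk.shortlex_support_lt_iff.1 huv
  obtain ⟨hvw_len, hvw_lt⟩ := Walk.shortlex_support_lt_iff.1 hvw
  obtain ⟨hxq_len, hxq_le⟩ := Walk.shortlex_support_le_iff.1 (h.shortlex_le x q hq)
  obtain ⟨hwr_len, hwr_le⟩ := Walk.shortlex_support_le_iff.1 (h.shortlex_le w r hr)
  have hu_lt_q : (vec u).support < q.support := (hux_lt (by omega)).trans_le (hxq_le (by omega))
  have hv_lt_r := List.append_lt_append_of_length_eq hu_lt_q
    (by simp only [Walk.length_support]; omega) [w] [v]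
  rw [hqv, ← hr_supp] at hv_lt_r
  exact lt_irrefl _ ((hv_lt_r.trans (hvw_lt (by omega))).trans_le (hwr_le (by omega)))

end IsShortlexLeastPaths

end SimpleGraph

theorem canonical_bft_general {V : Type*} [LinearOrder V]
    (G : SimpleGraph V) (v0 : V)
    (vec : ∀ v : V, G.Walk v0 v)
    (hpath : ∀ v : V, (vec v).IsPath)
    (hleast : ∀ (v : V) (q : G.Walk v0 v), q.IsPath →
      (vec v).support = q.support ∨ travOrd (vec v).support q.support) :
    IsStrictTotalOrder V (fun v w : V => travOrd (vec v).support (vec w).support) ∧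
    ∀ u v w : V,
      travOrd (vec u).support (vec v).support →
      travOrd (vec v).support (vec w).support →
      G.Adj u w →
      ∃ x : V, travOrd (vec x).support (vec v).support ∧
        (travOrd (vec x).support (vec u).support ∨ x = u) ∧ G.Adj x v := by
  have h := SimpleGraph.IsShortlexLeastPaths.of_travOrd hpath hleast
  have hinj : Function.Injective fun v => (vec v).support :=
    fun _ _ => SimpleGraph.Walk.eq_of_support_eq
  refine ⟨isStrictTotalOrder_travOrd_comp hinj, fun u v w huv hvw huw => ?_⟩
  simp only [travOrd_iff_shortlex_lt] at huv hvw ⊢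
  have hv : ¬ (vec v).Nil := SimpleGraph.Walk.not_nil_of_shortlex_lt huv
  refine ⟨(vec v).penultimate, h.penultimate_lt hv, ?_, (vec v).adj_penultimate hv⟩
  rcases (h.penultimate_le_of_adj huv hvw huw).lt_or_eq with hlt | heq
  · exact Or.inl hlt
  · exact Or.inr (hinj (shortlex_injective heq))

/-- Let `(G,<)` be a finite ordered connected graph with least vertex `v₀`, and
for each `v` let `vec v` be the `<*`-least shortest path from `v₀` to `v`.
Define `v ≺ w` iff `vec v <* vec w` (comparing supports). Then `≺` is a linear
order and a breadth-first traversal of `G`. -/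
theorem canonical_bft {V : Type*} [Fintype V] [LinearOrder V]
    (G : SimpleGraph V) (hc : G.Connected) (v0 : V) (hv0 : ∀ u : V, v0 ≤ u)
    (vec : ∀ v : V, G.Walk v0 v)
    (hpath : ∀ v : V, (vec v).IsPath)
    (hleast : ∀ (v : V) (q : G.Walk v0 v), q.IsPath →
      (vec v).support = q.support ∨ travOrd (vec v).support q.support) :
    IsStrictTotalOrder V (fun v w : V => travOrd (vec v).support (vec w).support) ∧
    ∀ u v w : V,
      travOrd (vec u).support (vec v).support →
      travOrd (vec v).support (vec w).support →
      G.Adj u w →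
      ∃ x : V, travOrd (vec x).support (vec v).support ∧
        (travOrd (vec x).support (vec u).support ∨ x = u) ∧ G.Adj x v :=
  canonical_bft_general G v0 vec hpath hleast
end

section
/- Let (G,<) be a finite ordered connected graph with <-least vertex v₀, and define ≺ by the <*-least shortest path from v₀ as above. Then for every vertex v ≠ v₀, the ≺-least neighbor of v is the second-to-last vertex of the <*-least shortest path from v₀ to v. -/
/-!
Write `vec v` as a path `w` to `u` followed by the edge `uv`, so `vec u ≤* w`. If a neighbour `x`
of `v` had `vec x ≺ vec u`, then `vec x <* w`. Should `v` lie on `vec x`, the segment of `vec x`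
up to `v` is a path to `v` shorter than `vec v`; otherwise `vec x` followed by the edge `xv` is a
path to `v` that is `<*`-smaller than `w` followed by `uv`, i.e. than `vec v`. Both contradict
the minimality of `vec v`.
-/

theorem List.Lex.append_of_length_eq {α : Type*} {r : α → α → Prop} :
    ∀ {s₁ s₂ : List α}, s₁.length = s₂.length → Lex r s₁ s₂ →
      ∀ t₁ t₂ : List α, Lex r (s₁ ++ t₁) (s₂ ++ t₂)
  | [], [], _, h, _, _ => nomatch h
  | [], _ :: _, hlen, _, _, _ => nomatch hlen
  | _ :: _, _ :: _, _, .rel h, _, _ => .rel h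
  | _ :: _, _ :: _, hlen, .cons h, t₁, t₂ =>
      .cons (append_of_length_eq (Nat.succ_injective hlen) h t₁ t₂)

section travOrd

variable {V : Type*} [LinearOrder V] {a b c : List V}

theorem travOrd_iff_shortlex : travOrd a b ↔ List.Shortlex (· < ·) a b :=
  List.shortlex_def.symm

theorem travOrd_irrefl (a : List V) : ¬ travOrd a a := by
  rw [travOrd_iff_shortlex]
  exact Std.Irrefl.irrefl a

theorem travOrd_trichotomous (a b : List V) : a = b ∨ travOrd a b ∨ travOrd b a := by
  simp only [travOrd_iff_shortlex]
  by_contra! h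
  exact h.1 (Std.Trichotomous.trichotomous a b h.2.1 h.2.2)

theorem travOrd_trans (hab : travOrd a b) (hbc : travOrd b c) : travOrd a c := by
  rcases hab with hab | ⟨hab, lab⟩ <;> rcases hbc with hbc | ⟨hbc, lbc⟩
  · exact .inl (hab.trans hbc)
  · exact .inl (hbc ▸ hab)
  · exact .inl (hab ▸ hbc)
  · exact .inr ⟨hab.trans hbc, List.lex_trans (fun h h' => h.trans h') lab lbc⟩

theorem travOrd_of_travOrd_of_eq_or_travOrd (hab : travOrd a b) (hbc : b = c ∨ travOrd b c) :
    travOrd a c :=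
  hbc.elim (· ▸ hab) (travOrd_trans hab)

theorem length_le_of_travOrd (h : travOrd a b) : a.length ≤ b.length :=
  h.elim le_of_lt (·.1.le)

theorem travOrd_append_right (h : travOrd a b) (t : List V) : travOrd (a ++ t) (b ++ t) := by
  rcases h with h | ⟨h, l⟩
  · exact .inl (by simpa using h)
  · exact .inr ⟨by simp [h], l.append_of_length_eq h t t⟩

end travOrd

namespace SimpleGraph.Walk

variable {V : Type*} {G : SimpleGraph V} {a b : V}

theorem eq_of_support_eq_s17 {c : V} {p : G.Walk a b} {q : G.Walk a c} (h : p.support = q.support) :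
    b = c := by
  rw [← p.getLast_support, ← q.getLast_support]
  simp only [h]

variable [LinearOrder V]

def IsTravOrdLeast (p : G.Walk a b) : Prop :=
  ∀ q : G.Walk a b, q.IsPath → p.support = q.support ∨ travOrd p.support q.support

theorem IsTravOrdLeast.not_travOrd {p q : G.Walk a b} (hp : p.IsTravOrdLeast) (hq : q.IsPath) :
    ¬ travOrd q.support p.support := fun h =>
  travOrd_irrefl _ (travOrd_of_travOrd_of_eq_or_travOrd h (hp q hq))

theorem IsTravOrdLeast.not_travOrd_dropLast {p : G.Walk a b} (hp : p.IsTravOrdLeast)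
    (hnil : ¬ p.Nil) {x : V} {r : G.Walk a x} (hr : r.IsPath) (hx : G.Adj x b) :
    ¬ travOrd r.support p.dropLast.support := by
  intro hrp
  by_cases hbr : b ∈ r.support
  · refine hp.not_travOrd (hr.takeUntil hbr) (.inl ?_)
    have := length_le_of_travOrd hrp
    have := r.length_takeUntil_le_length hbr
    have := length_dropLast_add_one hnil
    simp only [length_support] at *
    omega
  · refine hp.not_travOrd (hr.concat hbr hx) ?_
    rw [support_concat, ← support_dropLast_concat hnil]
    exact travOrd_append_right hrp [b]

end SimpleGraph.Walk

open SimpleGraph.Walk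

theorem bft_least_neighbor_is_penultimate_general {V : Type*} [LinearOrder V]
    (G : SimpleGraph V) (v0 : V)
    (vec : ∀ v : V, G.Walk v0 v)
    (hpath : ∀ v : V, (vec v).IsPath)
    (hleast : ∀ (v : V) (q : G.Walk v0 v), q.IsPath →
      (vec v).support = q.support ∨ travOrd (vec v).support q.support)
    (v : V) (hv : v ≠ v0) :
    ∃ u : V, G.Adj u v ∧
      (∀ x : V, G.Adj x v → u = x ∨ travOrd (vec u).support (vec x).support) ∧
      (vec v).support.dropLast.getLast? = some u := by
  have hnil : ¬ (vec v).Nil := fun h => hv h.eq.symm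
  set u := (vec v).penultimate
  refine ⟨u, (vec v).adj_penultimate hnil, fun x hx => ?_, ?_⟩
  · rcases travOrd_trichotomous (vec u).support (vec x).support with h | h | h
    · exact .inl (eq_of_support_eq_s17 h)
    · exact .inr h
    · have hxw : travOrd (vec x).support (vec v).dropLast.support :=
        travOrd_of_travOrd_of_eq_or_travOrd h (hleast u _ (hpath v).dropLast)
      exact (IsTravOrdLeast.not_travOrd_dropLast (hleast v) hnil (hpath x) hx hxw).elim
  · rw [← support_dropLast hnil, List.getLast?_eq_some_getLast (vec v).dropLast.support_ne_nil,
      getLast_support]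

/-- Let `(G,<)` be a finite ordered connected graph with least vertex `v₀`, and
`vec v` the `<*`-least shortest path from `v₀` to `v`; let `v ≺ w` iff
`vec v <* vec w`. Then for every `v ≠ v₀`, the `≺`-least neighbor of `v` is the
second-to-last vertex of `vec v`. -/
theorem bft_least_neighbor_is_penultimate {V : Type*} [Fintype V] [LinearOrder V]
    (G : SimpleGraph V) (hc : G.Connected) (v0 : V) (hv0 : ∀ u : V, v0 ≤ u)
    (vec : ∀ v : V, G.Walk v0 v)
    (hpath : ∀ v : V, (vec v).IsPath)
    (hleast : ∀ (v : V) (q : G.Walk v0 v), q.IsPath →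
      (vec v).support = q.support ∨ travOrd (vec v).support q.support)
    (v : V) (hv : v ≠ v0) :
    ∃ u : V, G.Adj u v ∧
      (∀ x : V, G.Adj x v → u = x ∨ travOrd (vec u).support (vec x).support) ∧
      (vec v).support.dropLast.getLast? = some u :=
  bft_least_neighbor_is_penultimate_general G v0 vec hpath hleast v hv
end
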